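/- arXiv:1004.3777 — 4 statements merged into one kernel-verified Lean document; each statement's English description precedes it below -/
import Mathlib

section
/- Let f : {0,1}^k → ℝ≥0 be a symmetric set function (f(x) = f(x̄) for all x, where x̄ is the coordinatewise complement), and for t ∈ {0,...,k} let a(t) be the average of f over strings of Hamming weight t. If a is monotonely nondecreasing on [0, k/2], then max over p ∈ [0,1] of E_{x ~ Bernoulli(p)^k}[f(x)] is attained at p = 1/2, i.e., it equals 2^{-k} ∑_{x ∈ {0,1}^k} f(x). -/
open Finset

/-- Hamming weight of `x : Fin k → Bool`. -/
def hw {k : ℕ} (x : Fin k → Bool) : ℕ := (univ.filter fun i => x i = true).card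

/-- Expectation of `f` under the `p`-biased product distribution on `{0,1}^k`. -/
noncomputable def biasedE (k : ℕ) (f : (Fin k → Bool) → ℝ) (p : ℝ) : ℝ :=
  ∑ x : Fin k → Bool, f x * p ^ hw x * (1 - p) ^ (k - hw x)

/-- Average of `f` over strings of Hamming weight `t`. -/
noncomputable def levelAvg (k : ℕ) (f : (Fin k → Bool) → ℝ) (t : ℕ) : ℝ :=
  (1 / (k.choose t : ℝ)) * ∑ x ∈ univ.filter (fun x : Fin k → Bool => hw x = t), f x

/-!
Grouping strings by weight, `biasedE k f p = ∑ₜ a(t) Bₜ(p)` with `Bₜ` the Bernstein (binomial)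
weights and `a = levelAvg k f`. Symmetry of `f` gives `a(t) = a(k - t)`, so `a(t)` is `a(0)` plus
the increments `a(s) - a(s - 1)` over `1 ≤ s ≤ min(t, k - t)`; swapping sums,
`biasedE k f p = a(0) + ∑_{1 ≤ s ≤ k/2} (a(s) - a(s - 1)) · P_p(s ≤ T ≤ k - s)`
with `T ~ Bin(k, p)`, and `P_p(s ≤ T ≤ k - s)` is `(centralMass ℝ k s).eval p`.
The increments are nonnegative by monotonicity, and each central probability is maximal at
`p = 1/2`: its derivative is `k (b(p) - b(1 - p))` with `b = B_{k-1, s-1}`, which is `≥ 0` exactly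
when `p ≤ 1/2`.
-/

open Polynomial

noncomputable def centralMass (R : Type*) [CommRing R] (n s : ℕ) : R[X] :=
  ∑ t ∈ Icc s (n - s), bernsteinPolynomial R n t

theorem derivative_centralMass_succ (R : Type*) [CommRing R] {n s : ℕ} (h : 2 * (s + 1) ≤ n) :
    derivative (centralMass R n (s + 1)) =
      n * (bernsteinPolynomial R (n - 1) s - bernsteinPolynomial R (n - 1) (n - 1 - s)) := by
  have hIcc : Icc (s + 1) (n - (s + 1)) = Ico (s + 1) (n - 1 - s + 1) := by
    ext t; simp only [mem_Icc, mem_Ico]; omega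
  rw [centralMass, derivative_sum, hIcc, ← sum_Ico_add']
  simp only [bernsteinPolynomial.derivative_succ, ← mul_sum,
    ← neg_sub (bernsteinPolynomial R (n - 1) (_ + 1)), sum_neg_distrib]
  rw [sum_Ico_sub (bernsteinPolynomial R (n - 1)) (by omega), neg_sub]

theorem bernsteinPolynomial_eval_one_sub_le {n ν : ℕ} (h : ν ≤ n - ν) {x : ℝ}
    (hx₀ : 0 ≤ x) (hx : x ≤ 1 / 2) :
    (bernsteinPolynomial ℝ n ν).eval (1 - x) ≤ (bernsteinPolynomial ℝ n ν).eval x := by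
  obtain ⟨r, hr⟩ := Nat.exists_eq_add_of_le h
  have hxr : x ^ r ≤ (1 - x) ^ r := pow_le_pow_left₀ hx₀ (by linarith) r
  have hc : 0 ≤ (n.choose ν : ℝ) * x ^ ν * (1 - x) ^ ν := by
    have : 0 ≤ 1 - x := by linarith
    positivity
  simp only [bernsteinPolynomial, eval_mul, eval_pow, eval_sub, eval_one, eval_X, eval_natCast,
    sub_sub_cancel, hr]
  calc (n.choose ν : ℝ) * (1 - x) ^ ν * x ^ (ν + r)
      = (n.choose ν : ℝ) * x ^ ν * (1 - x) ^ ν * x ^ r := by ring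
    _ ≤ (n.choose ν : ℝ) * x ^ ν * (1 - x) ^ ν * (1 - x) ^ r := mul_le_mul_of_nonneg_left hxr hc
    _ = (n.choose ν : ℝ) * x ^ ν * (1 - x) ^ (ν + r) := by ring

theorem centralMass_eval_le_eval_half {n s : ℕ} (hs : 1 ≤ s) (h : 2 * s ≤ n) {p : ℝ}
    (hp : p ∈ Set.Icc (0 : ℝ) 1) :
    (centralMass ℝ n s).eval p ≤ (centralMass ℝ n s).eval (1 / 2) := by
  obtain ⟨s, rfl⟩ := Nat.exists_eq_add_of_le' hs
  set g := fun x : ℝ => (centralMass ℝ n (s + 1)).eval x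
  have hflip (x : ℝ) : (bernsteinPolynomial ℝ (n - 1) (n - 1 - s)).eval x =
      (bernsteinPolynomial ℝ (n - 1) s).eval (1 - x) := by
    rw [← bernsteinPolynomial.flip _ _ _ (by omega), eval_comp]
    simp
  have hderiv (x : ℝ) : deriv g x = n * ((bernsteinPolynomial ℝ (n - 1) s).eval x -
      (bernsteinPolynomial ℝ (n - 1) s).eval (1 - x)) := by
    simp [g, Polynomial.deriv, derivative_centralMass_succ ℝ h, hflip]
  have hν : s ≤ n - 1 - s := by omega
  have hmono : MonotoneOn g (Set.Icc 0 (1 / 2)) := by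
    refine monotoneOn_of_deriv_nonneg (convex_Icc _ _) (Polynomial.continuousOn _)
      (Polynomial.differentiable _).differentiableOn fun x hx => ?_
    rw [interior_Icc] at hx
    rw [hderiv]
    exact mul_nonneg n.cast_nonneg
      (sub_nonneg.2 (bernsteinPolynomial_eval_one_sub_le hν hx.1.le hx.2.le))
  have hanti : AntitoneOn g (Set.Icc (1 / 2) 1) := by
    refine antitoneOn_of_deriv_nonpos (convex_Icc _ _) (Polynomial.continuousOn _)
      (Polynomial.differentiable _).differentiableOn fun x hx => ?_
    rw [interior_Icc] at hx
    rw [hderiv]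
    have hle := bernsteinPolynomial_eval_one_sub_le hν (x := 1 - x) (by linarith [hx.2])
      (by linarith [hx.1])
    rw [sub_sub_cancel] at hle
    exact mul_nonpos_of_nonneg_of_nonpos n.cast_nonneg (sub_nonpos.2 hle)
  rcases le_total p (1 / 2) with hp' | hp'
  · exact hmono ⟨hp.1, hp'⟩ ⟨by norm_num, le_rfl⟩ hp'
  · exact hanti ⟨le_rfl, by norm_num⟩ ⟨hp', hp.2⟩ hp'

theorem eq_add_sum_ite_of_symm {M : Type*} [AddCommGroup M] {k : ℕ} (a : ℕ → M)
    (ha : ∀ t ≤ k, a (k - t) = a t) {t : ℕ} (ht : t ≤ k) :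
    a t = a 0 + ∑ s ∈ Icc 1 (k / 2), if t ∈ Icc s (k - s) then a s - a (s - 1) else 0 := by
  have hfilter : {s ∈ Icc 1 (k / 2) | t ∈ Icc s (k - s)} = Ico (0 + 1) (min t (k - t) + 1) := by
    ext s; simp only [mem_filter, mem_Icc, mem_Ico]; omega
  have hmin : a (min t (k - t)) = a t := by
    rcases le_total t (k - t) with h | h
    · rw [min_eq_left h]
    · rw [min_eq_right h, ha t ht]
  rw [← sum_filter, hfilter, ← sum_Ico_add']
  simp only [Nat.add_sub_cancel]
  rw [sum_Ico_sub a (Nat.zero_le _), hmin, add_sub_cancel]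

theorem hw_le {k : ℕ} (x : Fin k → Bool) : hw x ≤ k := by
  simpa [hw] using card_filter_le univ fun i => x i = true

theorem hw_not {k : ℕ} (x : Fin k → Bool) : hw (fun i => !x i) = k - hw x := by
  unfold hw
  have h : (univ.filter fun i => (!x i) = true) = (univ.filter fun i => x i = true)ᶜ := by
    ext i; simp
  rw [h, card_compl, Fintype.card_fin]

theorem levelAvg_sub_of_symm {k : ℕ} (f : (Fin k → Bool) → ℝ)
    (hsym : ∀ x, f x = f (fun i => !x i)) {t : ℕ} (ht : t ≤ k) :
    levelAvg k f (k - t) = levelAvg k f t := by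
  unfold levelAvg
  rw [Nat.choose_symm ht]
  congr 1
  refine sum_nbij' (fun x i => !x i) (fun x i => !x i) ?_ ?_ ?_ ?_ ?_ <;>
    simp only [mem_filter, mem_univ, true_and]
  · intro x hx; rw [hw_not, hx, Nat.sub_sub_self ht]
  · intro x hx; rw [hw_not, hx]
  · intro x _; simp
  · intro x _; simp
  · intro x _; exact hsym x

theorem biasedE_eq_sum_levelAvg (k : ℕ) (f : (Fin k → Bool) → ℝ) (p : ℝ) :
    biasedE k f p = ∑ t ∈ range (k + 1), levelAvg k f t * (bernsteinPolynomial ℝ k t).eval p := by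
  rw [biasedE, ← sum_fiberwise_of_maps_to (g := hw) (t := range (k + 1))
    fun x _ => mem_range_succ_iff.2 (hw_le x)]
  refine sum_congr rfl fun t ht => ?_
  have hchoose : (k.choose t : ℝ) ≠ 0 := by
    exact_mod_cast (Nat.choose_pos (mem_range_succ_iff.1 ht)).ne'
  calc ∑ x with hw x = t, f x * p ^ hw x * (1 - p) ^ (k - hw x)
      = (∑ x with hw x = t, f x) * (p ^ t * (1 - p) ^ (k - t)) := by
        rw [sum_mul]
        refine sum_congr rfl fun x hx => ?_
        rw [(mem_filter.1 hx).2, mul_assoc]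
    _ = levelAvg k f t * (bernsteinPolynomial ℝ k t).eval p := by
        simp only [levelAvg, bernsteinPolynomial, eval_mul, eval_pow, eval_sub, eval_one, eval_X,
          eval_natCast]
        field_simp

theorem biasedE_eq_add_sum_centralMass {k : ℕ} (f : (Fin k → Bool) → ℝ)
    (hsym : ∀ x, f x = f (fun i => !x i)) (p : ℝ) :
    biasedE k f p = levelAvg k f 0 + ∑ s ∈ Icc 1 (k / 2),
      (levelAvg k f s - levelAvg k f (s - 1)) * (centralMass ℝ k s).eval p := by
  set a := levelAvg k f
  have hsub (s : ℕ) (hs : s ∈ Icc 1 (k / 2)) : Icc s (k - s) ⊆ range (k + 1) := fun t ht => by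
    simp only [mem_Icc, mem_range] at ht ⊢; omega
  calc biasedE k f p
      = ∑ t ∈ range (k + 1), (a 0 + ∑ s ∈ Icc 1 (k / 2),
          if t ∈ Icc s (k - s) then a s - a (s - 1) else 0) *
            (bernsteinPolynomial ℝ k t).eval p := by
        rw [biasedE_eq_sum_levelAvg]
        refine sum_congr rfl fun t ht => ?_
        rw [← eq_add_sum_ite_of_symm a (fun t => levelAvg_sub_of_symm f hsym)
          (mem_range_succ_iff.1 ht)]
    _ = a 0 * (∑ t ∈ range (k + 1), bernsteinPolynomial ℝ k t).eval p + ∑ s ∈ Icc 1 (k / 2),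
          (a s - a (s - 1)) * (centralMass ℝ k s).eval p := by
        simp only [add_mul, sum_add_distrib, sum_mul, ite_zero_mul, eval_finsetSum, mul_sum]
        rw [sum_comm]
        congr 1
        refine sum_congr rfl fun s hs => ?_
        rw [sum_ite_mem, inter_eq_right.2 (hsub s hs), centralMass, eval_finsetSum, mul_sum]
    _ = a 0 + ∑ s ∈ Icc 1 (k / 2), (a s - a (s - 1)) * (centralMass ℝ k s).eval p := by
        rw [bernsteinPolynomial.sum, eval_one, mul_one]

theorem biasedE_half (k : ℕ) (f : (Fin k → Bool) → ℝ) :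
    biasedE k f (1 / 2) = ((2 : ℝ) ^ k)⁻¹ * ∑ x : Fin k → Bool, f x := by
  rw [biasedE, mul_sum]
  refine sum_congr rfl fun x _ => ?_
  rw [show (1 : ℝ) - 1 / 2 = 1 / 2 by norm_num, mul_assoc, ← pow_add,
    Nat.add_sub_cancel' (hw_le x), one_div, inv_pow, mul_comm]

theorem symmetric_bias_max_at_half_general {k : ℕ} (f : (Fin k → Bool) → ℝ)
    (hsym : ∀ x, f x = f (fun i => ! x i))
    (hmono : ∀ s t : ℕ, s ≤ t → 2 * t ≤ k → levelAvg k f s ≤ levelAvg k f t) :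
    (∀ p ∈ Set.Icc (0 : ℝ) 1, biasedE k f p ≤ ((2 : ℝ) ^ k)⁻¹ * ∑ x : Fin k → Bool, f x) ∧
    biasedE k f (1 / 2) = ((2 : ℝ) ^ k)⁻¹ * ∑ x : Fin k → Bool, f x := by
  refine ⟨fun p hp => ?_, biasedE_half k f⟩
  rw [← biasedE_half, biasedE_eq_add_sum_centralMass f hsym,
    biasedE_eq_add_sum_centralMass f hsym]
  refine (add_le_add_iff_left _).2 (sum_le_sum fun s hs => ?_)
  obtain ⟨hs₁, hs₂⟩ := mem_Icc.1 hs
  exact mul_le_mul_of_nonneg_left (centralMass_eval_le_eval_half hs₁ (by omega) hp)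
    (sub_nonneg.2 (hmono (s - 1) s (Nat.sub_le s 1) (by omega)))

theorem symmetric_bias_max_at_half {k : ℕ} (f : (Fin k → Bool) → ℝ)
    (hf0 : ∀ x, 0 ≤ f x)
    (hsym : ∀ x, f x = f (fun i => ! x i))
    (hmono : ∀ s t : ℕ, s ≤ t → 2 * t ≤ k → levelAvg k f s ≤ levelAvg k f t) :
    (∀ p ∈ Set.Icc (0 : ℝ) 1, biasedE k f p ≤ ((2 : ℝ) ^ k)⁻¹ * ∑ x : Fin k → Bool, f x) ∧
    biasedE k f (1 / 2) = ((2 : ℝ) ^ k)⁻¹ * ∑ x : Fin k → Bool, f x :=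
  symmetric_bias_max_at_half_general f hsym hmono
end

section
/- (Margulis–Russo Lemma) Let f : {0,1}^k → {0,1} be monotone. Then the derivative with respect to p of E_{x ~ Bernoulli(p)^k}[f(x)] equals ∑_{i=1}^k Pr_{x ~ Bernoulli(p)^k}[f(x \ i) = 0 ∧ f(x ∪ i) = 1], where x \ i sets the i-th coordinate to 0 and x ∪ i sets it to 1. -/
/-!
Write the `p`-biased weight of `x` as the product `∏ j, (if x j then p else 1 - p)`. By the
product rule its derivative is a sum over coordinates `i`, the `i`-th term having its `i`-th
factor replaced by `±1`. Pairing `x` with the point whose `i`-th coordinate is flipped, the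
`i`-th term of the derivative of `E_p[f]` becomes `∑ (f (x ∪ i) - f (x \ i)) · w_{-i}(x)`,
where `w_{-i}` is the weight of the remaining coordinates. By monotonicity
`f (x ∪ i) - f (x \ i)` is the indicator that `i` is pivotal at `x`, and since
`w_{-i}(x) = w(x \ i) + w(x ∪ i)` the sum is the probability that `i` is pivotal.
-/

open Finset

theorem Fintype.sum_eq_sum_filter_add_update {ι M : Type*} [Fintype ι] [DecidableEq ι]
    [AddCommMonoid M] (i : ι) (h : (ι → Bool) → M) :
    ∑ x, h x = ∑ x with x i = false, (h x + h (Function.update x i true)) := by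
  rw [sum_add_distrib, ← sum_filter_add_sum_filter_not univ (fun x => x i = false) h]
  congr 1
  refine sum_nbij' (fun x => Function.update x i false) (fun x => Function.update x i true)
    ?_ ?_ ?_ ?_ fun x hx => ?_
  all_goals simp_all [Function.update_idem]
  rw [← hx, Function.update_eq_self]

theorem Bool.indicator_sub_indicator_of_le {a b : Bool} (h : a ≤ b) :
    ((if b = true then 1 else 0) - if a = true then 1 else 0 : ℝ) =
      if a = false ∧ b = true then 1 else 0 := by
  revert h; cases a <;> cases b <;> simp

section BernoulliWeight

variable {ι : Type*} [Fintype ι]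

def bernoulliWeight (p : ℝ) (x : ι → Bool) : ℝ := ∏ j, if x j = true then p else 1 - p

def bernoulliWeightExcept [DecidableEq ι] (p : ℝ) (i : ι) (x : ι → Bool) : ℝ :=
  ∏ j ∈ univ.erase i, if x j = true then p else 1 - p

theorem bernoulliWeight_eq_pow_hw {k : ℕ} (p : ℝ) (x : Fin k → Bool) :
    bernoulliWeight p x = p ^ hw x * (1 - p) ^ (k - hw x) := by
  have hcard := card_filter_add_card_filter_not (s := univ) fun j => x j = true
  rw [card_univ, Fintype.card_fin] at hcard
  rw [bernoulliWeight, prod_ite, prod_const, prod_const, hw]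
  congr 2
  omega

variable [DecidableEq ι]

theorem bernoulliWeight_eq_mul_except (p : ℝ) (i : ι) (x : ι → Bool) :
    bernoulliWeight p x = (if x i = true then p else 1 - p) * bernoulliWeightExcept p i x :=
  (mul_prod_erase univ _ (mem_univ i)).symm

theorem bernoulliWeightExcept_update (p : ℝ) (i : ι) (x : ι → Bool) (b : Bool) :
    bernoulliWeightExcept p i (Function.update x i b) = bernoulliWeightExcept p i x :=
  prod_congr rfl fun _ hj => by rw [Function.update_of_ne (ne_of_mem_erase hj)]

theorem hasDerivAt_bernoulliWeight (p : ℝ) (x : ι → Bool) :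
    HasDerivAt (bernoulliWeight · x)
      (∑ i, bernoulliWeightExcept p i x * if x i = true then 1 else -1) p := by
  refine HasDerivAt.fun_finsetProd fun i _ => ?_
  split_ifs
  · exact hasDerivAt_id p
  · simpa using (hasDerivAt_id p).const_sub 1

theorem sum_mul_partialDeriv_bernoulliWeight_eq_sum_pivotal {f : (ι → Bool) → Bool}
    (hf : Monotone f) (p : ℝ) (i : ι) :
    ∑ x, (if f x = true then 1 else 0) *
        (bernoulliWeightExcept p i x * if x i = true then 1 else -1) =
      ∑ x, (if f (Function.update x i false) = false ∧ f (Function.update x i true) = true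
        then 1 else 0) * bernoulliWeight p x := by
  rw [Fintype.sum_eq_sum_filter_add_update i, Fintype.sum_eq_sum_filter_add_update i]
  refine sum_congr rfl fun x hx => ?_
  have hxi : x i = false := (mem_filter.mp hx).2
  have hx0 : Function.update x i false = x := Function.update_eq_self_iff.mpr hxi.symm
  have hle : f x ≤ f (Function.update x i true) := hf (le_update_self_iff.mpr (Bool.le_true _))
  simp only [Function.update_idem, hx0, Function.update_self, hxi, bernoulliWeightExcept_update,
    bernoulliWeight_eq_mul_except p i, Bool.false_eq_true, if_false, if_true]
  rw [← Bool.indicator_sub_indicator_of_le hle]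
  ring

end BernoulliWeight

/-- Margulis–Russo lemma. -/
theorem margulis_russo {k : ℕ} (f : (Fin k → Bool) → Bool)
    (hmono : ∀ x y : Fin k → Bool, (∀ i, x i ≤ y i) → f x ≤ f y) (p : ℝ) :
    HasDerivAt
      (fun q : ℝ => ∑ x : Fin k → Bool,
        (if f x = true then (1 : ℝ) else 0) * q ^ hw x * (1 - q) ^ (k - hw x))
      (∑ i : Fin k, ∑ x : Fin k → Bool,
        (if f (Function.update x i false) = false ∧ f (Function.update x i true) = true
          then (1 : ℝ) else 0) * p ^ hw x * (1 - p) ^ (k - hw x))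
      p := by
  simp only [mul_assoc, ← bernoulliWeight_eq_pow_hw]
  have hderiv := HasDerivAt.fun_sum fun x (_ : x ∈ univ) =>
    (hasDerivAt_bernoulliWeight p x).const_mul (if f x = true then (1 : ℝ) else 0)
  simp only [mul_sum] at hderiv
  rwa [sum_comm,
    sum_congr rfl fun i _ => sum_mul_partialDeriv_bernoulliWeight_eq_sum_pivotal hmono p i]
    at hderiv
end

section
/- The function f : 2^{[8]} → [0,1] defined by f(S) = f([8] \ S) if |S| > 4, f(S) = |S|/4 if |S| < 4, f(S) = 1 if |S| = 4 and S ∈ C, and f(S) = 3/4 if |S| = 4 and S ∉ C, is submodular, where C is any collection of 4-element subsets of [8] such that any two distinct members of C ∪ {complements of C} intersect in exactly 2 elements. -/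
open Finset

theorem fsym4_submodular (C : Finset (Finset (Fin 8)))
    (hcard : ∀ S ∈ C, S.card = 4)
    (hcompl : ∀ S ∈ C, (univ \ S) ∈ C)
    (hint : ∀ S ∈ C, ∀ T ∈ C, S ≠ T → (S ∩ T).card = 2 ∨ T = univ \ S)
    (f : Finset (Fin 8) → ℝ)
    (hf_lt : ∀ S : Finset (Fin 8), S.card < 4 → f S = (S.card : ℝ) / 4)
    (hf_gt : ∀ S : Finset (Fin 8), 4 < S.card → f S = f (univ \ S))
    (hf_in : ∀ S : Finset (Fin 8), S.card = 4 → S ∈ C → f S = 1)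
    (hf_out : ∀ S : Finset (Fin 8), S.card = 4 → S ∉ C → f S = 3 / 4) :
    ∀ S T : Finset (Fin 8), f (S ∪ T) + f (S ∩ T) ≤ f S + f T := by
  -- cardinality bound and complement cardinality
  have hle8 : ∀ X : Finset (Fin 8), X.card ≤ 8 := fun X => by
    simpa using card_le_card (subset_univ X)
  have hcompl_card : ∀ X : Finset (Fin 8), (univ \ X).card = 8 - X.card := fun X => by
    rw [card_sdiff_of_subset (subset_univ X)]
    simp
  -- closed formula for f
  have key : ∀ X : Finset (Fin 8),
      f X = ((min X.card (8 - X.card) : ℕ) : ℝ) / 4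
        - (if X.card = 4 ∧ X ∉ C then (1 : ℝ) / 4 else 0) := by
    intro X
    rcases lt_trichotomy X.card 4 with h | h | h
    · have hmin : min X.card (8 - X.card) = X.card := by omega
      rw [hf_lt X h, hmin, if_neg (by omega)]
      ring
    · have hmin : min X.card (8 - X.card) = 4 := by omega
      by_cases hX : X ∈ C
      · rw [hf_in X h hX, hmin, if_neg (fun h => h.2 hX)]
        norm_num
      · rw [hf_out X h hX, hmin, if_pos ⟨h, hX⟩]
        norm_num
    · have h8 := hle8 X
      have hc : (univ \ X).card < 4 := by rw [hcompl_card]; omega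
      have hmin : min X.card (8 - X.card) = (univ \ X).card := by
        rw [hcompl_card]; omega
      rw [hf_gt X h, hf_lt _ hc, hmin, if_neg (by omega)]
      ring
  intro S T
  by_cases hST : S ⊆ T
  · rw [union_eq_right.2 hST, inter_eq_left.2 hST]
    linarith
  by_cases hTS : T ⊆ S
  · rw [union_eq_left.2 hTS, inter_eq_right.2 hTS]
  -- strict case
  have hia : (S ∩ T).card < S.card :=
    card_lt_card ⟨inter_subset_left, fun h => hST (fun x hx => (mem_inter.1 (h hx)).2)⟩
  have hib : (S ∩ T).card < T.card :=
    card_lt_card ⟨inter_subset_right, fun h => hTS (fun x hx => (mem_inter.1 (h hx)).1)⟩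
  have hau : S.card < (S ∪ T).card :=
    card_lt_card ⟨subset_union_left, fun h => hTS (fun x hx => h (mem_union_right S hx))⟩
  have hbu : T.card < (S ∪ T).card :=
    card_lt_card ⟨subset_union_right, fun h => hST (fun x hx => h (mem_union_left T hx))⟩
  have hsum : (S ∪ T).card + (S ∩ T).card = S.card + T.card :=
    card_union_add_card_inter S T
  -- nat inequality
  have hnat : min (S ∪ T).card (8 - (S ∪ T).card) + min (S ∩ T).card (8 - (S ∩ T).card)
      + (if S.card = 4 then 1 else 0) + (if T.card = 4 then 1 else 0)
      ≤ min S.card (8 - S.card) + min T.card (8 - T.card) := by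
    have h1 := hle8 S
    have h2 := hle8 T
    have h3 := hle8 (S ∪ T)
    split_ifs <;> omega
  rw [key S, key T, key (S ∪ T), key (S ∩ T)]
  have hpS : (if S.card = 4 ∧ S ∉ C then (1 : ℝ) / 4 else 0)
      ≤ ((if S.card = 4 then 1 else 0 : ℕ) : ℝ) / 4 := by
    split_ifs with h1 h2
    · norm_num
    · exact absurd h1.1 h2
    · norm_num
    · norm_num
  have hpT : (if T.card = 4 ∧ T ∉ C then (1 : ℝ) / 4 else 0)
      ≤ ((if T.card = 4 then 1 else 0 : ℕ) : ℝ) / 4 := by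
    split_ifs with h1 h2
    · norm_num
    · exact absurd h1.1 h2
    · norm_num
    · norm_num
  have hpU : (0 : ℝ) ≤ if (S ∪ T).card = 4 ∧ (S ∪ T) ∉ C then (1 : ℝ) / 4 else 0 := by
    split_ifs <;> norm_num
  have hpI : (0 : ℝ) ≤ if (S ∩ T).card = 4 ∧ (S ∩ T) ∉ C then (1 : ℝ) / 4 else 0 := by
    split_ifs <;> norm_num
  have hcast : ((min (S ∪ T).card (8 - (S ∪ T).card) : ℕ) : ℝ)
      + ((min (S ∩ T).card (8 - (S ∩ T).card) : ℕ) : ℝ)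
      + ((if S.card = 4 then 1 else 0 : ℕ) : ℝ) + ((if T.card = 4 then 1 else 0 : ℕ) : ℝ)
      ≤ ((min S.card (8 - S.card) : ℕ) : ℝ) + ((min T.card (8 - T.card) : ℕ) : ℝ) := by
    exact_mod_cast hnat
  linarith
end

section
/- Let C₃ ⊆ {0,1}^7 be the 7 nonzero codewords of the [7,3] simplex code (support of the Hadamard distribution for l = 3, minus the zero string), each of Hamming weight 4. Define f₃ : 2^{[7]} → [0,1] by: f₃(S) = |S|/4 if |S| ≤ 4 and S is a subset or superset of some C ∈ C₃; f₃(S) = (7-|S|)/3 if |S| > 4 and S is a superset of some C ∈ C₃; f₃(S) = 11/24 if |S| = 3 and S is not contained in any C ∈ C₃; f₃(S) = 17/24 if |S| = 4 and S ∉ C₃. Then f₃ is well-defined on all of 2^{[7]} and satisfies f₃(S) ≥ 1 for every S ∈ C₃. -/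
open Finset
open scoped Classical

/-- The function `f₃ : 2^[7] → [0,1]` from the asymmetric construction with `l = 3`.
`S` "has no errors" if it is a subset or a superset of some codeword in `C`. -/
noncomputable def f3 (C : Finset (Finset (Fin 7))) (S : Finset (Fin 7)) : ℝ :=
  if ∃ D ∈ C, S ⊆ D ∨ D ⊆ S then
    (if S.card ≤ 4 then (S.card : ℝ) / 4 else ((7 : ℝ) - S.card) / 3)
  else
    (if S.card = 3 then 11 / 24 else 17 / 24)

section Aux

variable {α : Type*} [Fintype α] [DecidableEq α]

private lemma sum_card_filter_mem (C : Finset (Finset α)) :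
    ∑ x : α, (C.filter fun D => x ∈ D).card = ∑ D ∈ C, D.card := by
  simp only [card_filter]
  rw [Finset.sum_comm]
  refine Finset.sum_congr rfl fun D _ => ?_
  simp [Finset.sum_ite_mem]

private lemma sum_sq_card_filter_mem (C : Finset (Finset α)) :
    ∑ x : α, ((C.filter fun D => x ∈ D).card)^2 = ∑ p ∈ C ×ˢ C, (p.1 ∩ p.2).card := by
  simp only [card_filter, sq, Finset.sum_mul_sum, Finset.sum_product]
  rw [Finset.sum_comm]
  refine Finset.sum_congr rfl fun D _ => ?_
  rw [Finset.sum_comm]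
  refine Finset.sum_congr rfl fun E _ => ?_
  have : ∀ x : α, (if x ∈ D then 1 else 0) * (if x ∈ E then 1 else 0)
      = if x ∈ D ∩ E then 1 else 0 := by
    intro x; by_cases h1 : x ∈ D <;> by_cases h2 : x ∈ E <;> simp [h1, h2]
  simp only [this, Finset.sum_ite_mem, Finset.univ_inter, Finset.sum_const,
    smul_eq_mul, mul_one]

private lemma sum_ite_pair_mem (D : Finset α) :
    ∑ p ∈ (univ : Finset α).offDiag, (if p.1 ∈ D ∧ p.2 ∈ D then 1 else 0)
      = D.card * D.card - D.card := by
  rw [← Finset.card_filter]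
  rw [show ((univ : Finset α).offDiag.filter fun p => p.1 ∈ D ∧ p.2 ∈ D) = D.offDiag by
    ext ⟨a, b⟩
    simp [Finset.mem_offDiag]
    tauto]
  exact Finset.offDiag_card D

private lemma sum_card_filter_pair (C : Finset (Finset α)) :
    ∑ p ∈ (univ : Finset α).offDiag, (C.filter fun D => p.1 ∈ D ∧ p.2 ∈ D).card
      = ∑ D ∈ C, (D.card * D.card - D.card) := by
  simp only [card_filter]
  rw [Finset.sum_comm]
  exact Finset.sum_congr rfl fun D _ => sum_ite_pair_mem D

private lemma sum_sq_card_filter_pair (C : Finset (Finset α)) :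
    ∑ p ∈ (univ : Finset α).offDiag, ((C.filter fun D => p.1 ∈ D ∧ p.2 ∈ D).card)^2
      = ∑ q ∈ C ×ˢ C, ((q.1 ∩ q.2).card * (q.1 ∩ q.2).card - (q.1 ∩ q.2).card) := by
  simp only [card_filter, sq, Finset.sum_mul_sum, Finset.sum_product]
  rw [Finset.sum_comm]
  refine Finset.sum_congr rfl fun D _ => ?_
  rw [Finset.sum_comm]
  refine Finset.sum_congr rfl fun E _ => ?_
  have : ∀ p : α × α, (if p.1 ∈ D ∧ p.2 ∈ D then 1 else 0) * (if p.1 ∈ E ∧ p.2 ∈ E then 1 else 0)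
      = if p.1 ∈ D ∩ E ∧ p.2 ∈ D ∩ E then 1 else 0 := by
    intro p
    by_cases ha : p.1 ∈ D <;> by_cases hb : p.2 ∈ D <;> by_cases hc : p.1 ∈ E <;>
      by_cases hd : p.2 ∈ E <;> simp [ha, hb, hc, hd, Finset.mem_inter]
  simp only [this]
  exact sum_ite_pair_mem (D ∩ E)

end Aux

theorem f3_well_defined_and_ge_one_on_codewords (C : Finset (Finset (Fin 7)))
    (hC : C.card = 7)
    (hcard : ∀ D ∈ C, D.card = 4)
    (hint : ∀ D ∈ C, ∀ E ∈ C, D ≠ E → (D ∩ E).card = 2) :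
    (∀ S : Finset (Fin 7), (∃ D ∈ C, S ⊆ D ∨ D ⊆ S) ∨ S.card = 3 ∨ S.card = 4) ∧
    (∀ S ∈ C, 1 ≤ f3 C S) := by
  classical
  -- basic sum evaluations
  have hsumcard : ∑ D ∈ C, D.card = 28 := by
    rw [Finset.sum_congr rfl hcard, Finset.sum_const, hC]
    rfl
  have hsumcard2 : ∑ D ∈ C, (D.card * D.card - D.card) = 84 := by
    rw [Finset.sum_congr rfl (fun D hD => by rw [hcard D hD]), Finset.sum_const, hC]
    rfl
  have hprod1 : ∑ q ∈ C ×ˢ C, (q.1 ∩ q.2).card = 112 := by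
    rw [← Finset.diag_union_offDiag C, Finset.sum_union (Finset.disjoint_diag_offDiag C),
      Finset.sum_diag]
    have hd : ∑ D ∈ C, ((D, D).1 ∩ (D, D).2).card = 28 := by
      simp only [Finset.inter_self]; exact hsumcard
    have ho : ∑ q ∈ C.offDiag, (q.1 ∩ q.2).card = 84 := by
      have hq2 : ∀ q ∈ C.offDiag, (q.1 ∩ q.2).card = 2 := by
        intro q hq
        rw [Finset.mem_offDiag] at hq
        exact hint _ hq.1 _ hq.2.1 hq.2.2
      rw [Finset.sum_congr rfl hq2, Finset.sum_const, Finset.offDiag_card, hC]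
      rfl
    rw [hd, ho]
  have hprod2 : ∑ q ∈ C ×ˢ C, ((q.1 ∩ q.2).card * (q.1 ∩ q.2).card - (q.1 ∩ q.2).card)
      = 168 := by
    rw [← Finset.diag_union_offDiag C, Finset.sum_union (Finset.disjoint_diag_offDiag C),
      Finset.sum_diag]
    have hd : ∑ D ∈ C, (((D, D).1 ∩ (D, D).2).card * ((D, D).1 ∩ (D, D).2).card
        - ((D, D).1 ∩ (D, D).2).card) = 84 := by
      simp only [Finset.inter_self]; exact hsumcard2
    have ho : ∑ q ∈ C.offDiag, ((q.1 ∩ q.2).card * (q.1 ∩ q.2).card - (q.1 ∩ q.2).card)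
        = 84 := by
      have hq2 : ∀ q ∈ C.offDiag,
          (q.1 ∩ q.2).card * (q.1 ∩ q.2).card - (q.1 ∩ q.2).card = 2 := by
        intro q hq
        rw [Finset.mem_offDiag] at hq
        rw [hint _ hq.1 _ hq.2.1 hq.2.2]
      rw [Finset.sum_congr rfl hq2, Finset.sum_const, Finset.offDiag_card, hC]
      rfl
    rw [hd, ho]
  -- every point lies in exactly 4 codewords
  have key1 : ∀ x : Fin 7, (C.filter fun D => x ∈ D).card = 4 := by
    have h1 : ∑ x : Fin 7, (C.filter fun D => x ∈ D).card = 28 := by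
      rw [sum_card_filter_mem]; exact hsumcard
    have h2 : ∑ x : Fin 7, ((C.filter fun D => x ∈ D).card)^2 = 112 := by
      rw [sum_sq_card_filter_mem]; exact hprod1
    have hz : ∑ x : Fin 7, (((C.filter fun D => x ∈ D).card : ℤ) - 4)^2 = 0 := by
      have e : ∀ x : Fin 7, (((C.filter fun D => x ∈ D).card : ℤ) - 4)^2
          = ((C.filter fun D => x ∈ D).card : ℤ)^2
            - 8 * ((C.filter fun D => x ∈ D).card : ℤ) + 16 := fun x => by ring
      rw [Finset.sum_congr rfl fun x _ => e x, Finset.sum_add_distrib,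
        Finset.sum_sub_distrib, ← Finset.mul_sum]
      have c1 : ∑ x : Fin 7, ((C.filter fun D => x ∈ D).card : ℤ)^2 = 112 := by
        exact_mod_cast h2
      have c2 : ∑ x : Fin 7, ((C.filter fun D => x ∈ D).card : ℤ) = 28 := by
        exact_mod_cast h1
      rw [c1, c2]
      simp
    intro x
    have := (Finset.sum_eq_zero_iff_of_nonneg (fun i _ => sq_nonneg _)).mp hz x (mem_univ x)
    have h4 : (((C.filter fun D => x ∈ D).card : ℤ)) = 4 := by nlinarith [this]
    exact_mod_cast h4
  -- every pair of distinct points lies in exactly 2 codewords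
  have key2 : ∀ a b : Fin 7, a ≠ b → (C.filter fun D => a ∈ D ∧ b ∈ D).card = 2 := by
    have h1 : ∑ p ∈ (univ : Finset (Fin 7)).offDiag,
        (C.filter fun D => p.1 ∈ D ∧ p.2 ∈ D).card = 84 := by
      rw [sum_card_filter_pair]; exact hsumcard2
    have h2 : ∑ p ∈ (univ : Finset (Fin 7)).offDiag,
        ((C.filter fun D => p.1 ∈ D ∧ p.2 ∈ D).card)^2 = 168 := by
      rw [sum_sq_card_filter_pair]; exact hprod2
    have hz : ∑ p ∈ (univ : Finset (Fin 7)).offDiag,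
        (((C.filter fun D => p.1 ∈ D ∧ p.2 ∈ D).card : ℤ) - 2)^2 = 0 := by
      have e : ∀ p : Fin 7 × Fin 7, (((C.filter fun D => p.1 ∈ D ∧ p.2 ∈ D).card : ℤ) - 2)^2
          = ((C.filter fun D => p.1 ∈ D ∧ p.2 ∈ D).card : ℤ)^2
            - 4 * ((C.filter fun D => p.1 ∈ D ∧ p.2 ∈ D).card : ℤ) + 4 := fun p => by ring
      rw [Finset.sum_congr rfl fun p _ => e p, Finset.sum_add_distrib,
        Finset.sum_sub_distrib, ← Finset.mul_sum]
      have c1 : ∑ p ∈ (univ : Finset (Fin 7)).offDiag,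
          ((C.filter fun D => p.1 ∈ D ∧ p.2 ∈ D).card : ℤ)^2 = 168 := by exact_mod_cast h2
      have c2 : ∑ p ∈ (univ : Finset (Fin 7)).offDiag,
          ((C.filter fun D => p.1 ∈ D ∧ p.2 ∈ D).card : ℤ) = 84 := by exact_mod_cast h1
      rw [c1, c2, Finset.sum_const, Finset.offDiag_card, Finset.card_univ]
      simp
    intro a b hab
    have hmem : (a, b) ∈ (univ : Finset (Fin 7)).offDiag := by
      rw [Finset.mem_offDiag]; exact ⟨mem_univ a, mem_univ b, hab⟩
    have := (Finset.sum_eq_zero_iff_of_nonneg (fun i _ => sq_nonneg _)).mp hz (a, b) hmem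
    have h4 : ((C.filter fun D => a ∈ D ∧ b ∈ D).card : ℤ) = 2 := by nlinarith [this]
    exact_mod_cast h4
  -- every pair of distinct points avoids some codeword
  have key3 : ∀ a b : Fin 7, a ≠ b → ∃ D ∈ C, a ∉ D ∧ b ∉ D := by
    intro a b hab
    have hAB : C.filter (fun D => a ∈ D ∧ b ∈ D)
        = (C.filter fun D => a ∈ D) ∩ (C.filter fun D => b ∈ D) :=
      Finset.filter_and _ _ _
    have hU : ((C.filter fun D => a ∈ D) ∪ (C.filter fun D => b ∈ D)).card = 6 := by
      have h := Finset.card_union_add_card_inter (C.filter fun D => a ∈ D)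
        (C.filter fun D => b ∈ D)
      rw [← hAB, key2 a b hab, key1 a, key1 b] at h
      omega
    have hsub : (C.filter fun D => a ∈ D) ∪ (C.filter fun D => b ∈ D) ⊆ C :=
      Finset.union_subset (Finset.filter_subset _ _) (Finset.filter_subset _ _)
    have hne : (C \ ((C.filter fun D => a ∈ D) ∪ (C.filter fun D => b ∈ D))).Nonempty := by
      rw [← Finset.card_pos, Finset.card_sdiff_of_subset hsub, hU, hC]
      norm_num
    obtain ⟨D, hD⟩ := hne
    rw [Finset.mem_sdiff, Finset.mem_union] at hD
    refine ⟨D, hD.1, ?_, ?_⟩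
    · intro h; exact hD.2 (Or.inl (Finset.mem_filter.mpr ⟨hD.1, h⟩))
    · intro h; exact hD.2 (Or.inr (Finset.mem_filter.mpr ⟨hD.1, h⟩))
  -- some codeword avoids any given point
  have key4 : ∀ a : Fin 7, ∃ D ∈ C, a ∉ D := by
    intro a
    have hne : (C \ (C.filter fun D => a ∈ D)).Nonempty := by
      rw [← Finset.card_pos, Finset.card_sdiff_of_subset (Finset.filter_subset _ _), key1 a, hC]
      norm_num
    obtain ⟨D, hD⟩ := hne
    rw [Finset.mem_sdiff] at hD
    exact ⟨D, hD.1, fun h => hD.2 (Finset.mem_filter.mpr ⟨hD.1, h⟩)⟩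
  have hCne : C.Nonempty := Finset.card_pos.mp (by omega)
  constructor
  · intro S
    by_cases h3 : S.card = 3
    · exact Or.inr (Or.inl h3)
    by_cases h4 : S.card = 4
    · exact Or.inr (Or.inr h4)
    left
    have hle : S.card ≤ 7 := by
      have := Finset.card_le_univ S
      simpa using this
    by_cases hsmall : S.card ≤ 2
    · -- S is contained in some codeword
      interval_cases h : S.card
      · obtain ⟨D, hD⟩ := hCne
        exact ⟨D, hD, Or.inl (by simp [Finset.card_eq_zero.mp h])⟩
      · obtain ⟨a, ha⟩ := Finset.card_eq_one.mp h
        have : 0 < (C.filter fun D => a ∈ D).card := by rw [key1 a]; norm_num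
        obtain ⟨D, hD⟩ := Finset.card_pos.mp this
        rw [Finset.mem_filter] at hD
        exact ⟨D, hD.1, Or.inl (by rw [ha]; simpa using hD.2)⟩
      · obtain ⟨a, b, hab, hS⟩ := Finset.card_eq_two.mp h
        have : 0 < (C.filter fun D => a ∈ D ∧ b ∈ D).card := by
          rw [key2 a b hab]; norm_num
        obtain ⟨D, hD⟩ := Finset.card_pos.mp this
        rw [Finset.mem_filter] at hD
        refine ⟨D, hD.1, Or.inl ?_⟩
        rw [hS]
        intro x hx
        simp only [Finset.mem_insert, Finset.mem_singleton] at hx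
        rcases hx with rfl | rfl
        · exact hD.2.1
        · exact hD.2.2
    · -- S contains some codeword
      have hge : 5 ≤ S.card := by omega
      have hcompl : Sᶜ.card ≤ 2 := by
        rw [Finset.card_compl]
        simp only [Fintype.card_fin]
        omega
      have hsub : ∀ D : Finset (Fin 7), (∀ x ∈ Sᶜ, x ∉ D) → D ⊆ S := by
        intro D hD x hx
        by_contra hxS
        exact hD x (Finset.mem_compl.mpr hxS) hx
      interval_cases h : Sᶜ.card
      · obtain ⟨D, hD⟩ := hCne
        refine ⟨D, hD, Or.inr (hsub D ?_)⟩
        intro x hx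
        rw [Finset.card_eq_zero.mp h] at hx
        simp at hx
      · obtain ⟨a, ha⟩ := Finset.card_eq_one.mp h
        obtain ⟨D, hD, haD⟩ := key4 a
        refine ⟨D, hD, Or.inr (hsub D ?_)⟩
        intro x hx
        rw [ha, Finset.mem_singleton] at hx
        subst hx
        exact haD
      · obtain ⟨a, b, hab, hS⟩ := Finset.card_eq_two.mp h
        obtain ⟨D, hD, haD, hbD⟩ := key3 a b hab
        refine ⟨D, hD, Or.inr (hsub D ?_)⟩
        intro x hx
        rw [hS] at hx
        simp only [Finset.mem_insert, Finset.mem_singleton] at hx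
        rcases hx with rfl | rfl
        · exact haD
        · exact hbD
  · intro S hS
    have hcond : ∃ D ∈ C, S ⊆ D ∨ D ⊆ S := ⟨S, hS, Or.inl (subset_refl S)⟩
    rw [f3, if_pos hcond, if_pos (by rw [hcard S hS])]
    rw [hcard S hS]
    norm_num
end
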